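/- arXiv:1602.03700 — 2 statements merged into one kernel-verified Lean document; each statement's English description precedes it below -/
import Mathlib

section
/- Let (G,l) be a finite connected ℕ-labelled graph and (G̃, l̃) its total blow-up graph, obtained by replacing every edge e by a path of l(e) edges each labelled 1. Let C and C̃ denote the groups of Cartier vertex labellings of (G,l) and (G̃,l̃), δ and δ̃ their multidegree operators, ε : ℤ^V → ℤ^Ṽ extension by zero, and ι : C → C̃ linear interpolation. Then the induced map on cokernels ε̄ : coker(δ) → coker(δ̃) is injective. -/
/-- A multigraph: vertices `V`, edges `E`, source/target maps (loops and multiple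
edges allowed). -/
structure Multigraph (V E : Type*) where
  s : E → V
  t : E → V

namespace Multigraph

variable {V E : Type*} (G : Multigraph V E)

/-- The edge `e` has endpoints `a` and `b`. -/
def Connects (e : E) (a b : V) : Prop :=
  (G.s e = a ∧ G.t e = b) ∨ (G.s e = b ∧ G.t e = a)

/-- Two vertices are connected by a walk. -/
def Reachable : V → V → Prop :=
  Relation.ReflTransGen (fun a b => ∃ e, G.Connects e a b)

/-- The graph is connected. -/
def Connected : Prop := ∀ a b : V, G.Reachable a b

/-- The cyclic successor on `Fin m`. -/
def cyc {m : ℕ} (i : Fin m) : Fin m :=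
  ⟨(i.1 + 1) % m, Nat.mod_lt _ (Nat.lt_of_le_of_lt (Nat.zero_le _) i.isLt)⟩

/-- A circuit: a closed walk with all edges and vertices distinct. -/
def IsCircuit {m : ℕ} (v : Fin m → V) (ed : Fin m → E) : Prop :=
  0 < m ∧ Function.Injective v ∧ Function.Injective ed ∧
    ∀ i, G.Connects (ed i) (v i) (v (cyc i))

/-- `(G, l)` is circuit-coprime: the labels of the edges of any circuit have gcd `1`. -/
def CircuitCoprime (l : E → ℕ) : Prop :=
  ∀ (m : ℕ) (v : Fin m → V) (ed : Fin m → E), G.IsCircuit v ed →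
    Finset.univ.gcd (fun i : Fin m => l (ed i)) = 1

/-- A vertex labelling `φ : V → ℤ` is Cartier (w.r.t. the edge labelling `l`) if for every
edge `e` with endpoints `v, w`, `l e` divides `φ v - φ w`. -/
def Cartier (l : E → ℕ) (φ : V → ℤ) : Prop :=
  ∀ e : E, (l e : ℤ) ∣ (φ (G.s e) - φ (G.t e))

/-- The multidegree operator: `(mdeg l φ) v` is the sum over edges `e` incident to `v` of
`(φ w - φ v) / l e`, `w` being the other endpoint of `e`.  For the constant labelling `1`
this is the graph Laplacian. -/
def mdeg [Fintype E] [DecidableEq V] (l : E → ℕ) (φ : V → ℤ) : V → ℤ := fun v =>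
  ∑ e : E,
    ((if G.s e = v then (φ (G.t e) - φ (G.s e)) / (l e : ℤ) else 0) +
      (if G.t e = v then (φ (G.s e) - φ (G.t e)) / (l e : ℤ) else 0))

/-- The total blow-up graph `(G̃, l̃)` of `(G, l)`: every edge `e` is replaced by a path of
`l e` edges (all labelled `1`), introducing `l e - 1` new vertices. -/
def blowup (l : E → ℕ) :
    Multigraph (V ⊕ Σ e : E, Fin (l e - 1)) (Σ e : E, Fin (l e)) where
  s := fun p =>
    if h : (p.2 : ℕ) = 0 then Sum.inl (G.s p.1)
    else Sum.inr ⟨p.1, ⟨(p.2 : ℕ) - 1, by have := p.2.isLt; omega⟩⟩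
  t := fun p =>
    if h : (p.2 : ℕ) = l p.1 - 1 then Sum.inl (G.t p.1)
    else Sum.inr ⟨p.1, ⟨(p.2 : ℕ), by have := p.2.isLt; omega⟩⟩

/-- The `j`-th vertex `w_j` (for `0 ≤ j ≤ l e`) of the path in the total blow-up graph
replacing the edge `e`; `w_0` and `w_(l e)` are the old endpoints of `e`. -/
def pathVertex (l : E → ℕ) (e : E) (j : ℕ) : V ⊕ Σ e : E, Fin (l e - 1) :=
  if h0 : j = 0 then Sum.inl (G.s e)
  else if h : j < l e then Sum.inr ⟨e, ⟨j - 1, by omega⟩⟩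
  else Sum.inl (G.t e)

end Multigraph

/-- The characteristic function `χ_v` of a vertex. -/
def chi {W : Type*} [DecidableEq W] (v : W) : W → ℤ := fun u => if u = v then 1 else 0

/-!
A labelling `ψ` of the blow-up whose Laplacian vanishes at the new vertices is discrete-harmonic,
hence affine, along each path `w₀, …, w_{l e}`: it climbs by the same slope `d e` at every step.
So its restriction `φ` to the old vertices satisfies `φ (t e) - φ (s e) = l e * d e`, which makes
`φ` Cartier with `(φ (t e) - φ (s e)) / l e = d e`; and the Laplacian of `ψ` at an old vertex only
sees the first and last steps of the incident paths, i.e. the same slopes that make up `mdeg l φ`.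
-/

namespace Multigraph

variable {V E : Type*} (G : Multigraph V E) (l : E → ℕ)

section Labelling

variable {G l} {φ : V → ℤ} {d : E → ℤ}

lemma cartier_of_sub_eq_mul (hφ : ∀ e, φ (G.t e) - φ (G.s e) = l e * d e) : G.Cartier l φ :=
  fun e => ⟨-d e, by rw [← neg_sub, hφ, mul_neg]⟩

lemma mdeg_apply_of_sub_eq_mul [Fintype E] [DecidableEq V] (hl : ∀ e, 0 < l e)
    (hφ : ∀ e, φ (G.t e) - φ (G.s e) = l e * d e) (v : V) :
    G.mdeg l φ v = ∑ e : E, ((if G.s e = v then d e else 0) + (if G.t e = v then -d e else 0)) := by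
  refine Finset.sum_congr rfl fun e _ => ?_
  have hne : (l e : ℤ) ≠ 0 := by exact_mod_cast (hl e).ne'
  have hφ' : φ (G.s e) - φ (G.t e) = l e * -d e := by linarith [hφ e]
  rw [hφ, hφ', Int.mul_ediv_cancel_left _ hne, Int.mul_ediv_cancel_left _ hne]

end Labelling

section PathVertex

lemma blowup_s (p : Σ e : E, Fin (l e)) : (G.blowup l).s p = G.pathVertex l p.1 p.2 := by
  obtain ⟨e, k⟩ := p
  by_cases hk : (k : ℕ) = 0 <;> simp [blowup, pathVertex, hk]

lemma blowup_t (p : Σ e : E, Fin (l e)) :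
    (G.blowup l).t p = G.pathVertex l p.1 ((p.2 : ℕ) + 1) := by
  obtain ⟨e, k⟩ := p
  have := k.isLt
  simp only [blowup, pathVertex, Nat.add_one_ne_zero, ↓reduceDIte, Nat.add_sub_cancel]
  split_ifs <;> first | rfl | omega

lemma pathVertex_zero (e : E) : G.pathVertex l e 0 = Sum.inl (G.s e) := rfl

lemma pathVertex_self {e : E} (he : 0 < l e) : G.pathVertex l e (l e) = Sum.inl (G.t e) := by
  simp [pathVertex, he.ne']

lemma pathVertex_eq_inr_iff (e : E) (i : Fin (l e - 1)) (j : ℕ) :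
    G.pathVertex l e j = Sum.inr ⟨e, i⟩ ↔ j = (i : ℕ) + 1 := by
  have := i.isLt
  simp only [pathVertex]
  split_ifs
  · exact iff_of_false (by simp) (by omega)
  · simp only [Sum.inr.injEq, Sigma.mk.inj_iff, heq_eq_eq, true_and, Fin.ext_iff]
    omega
  · exact iff_of_false (by simp) (by omega)

lemma pathVertex_ne_inr {e e' : E} (h : e ≠ e') (i : Fin (l e' - 1)) (j : ℕ) :
    G.pathVertex l e j ≠ Sum.inr ⟨e', i⟩ := by
  simp only [pathVertex]
  split_ifs <;> simp [h]

lemma pathVertex_eq_inl_iff {e : E} (he : 0 < l e) (v : V) (j : ℕ) :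
    G.pathVertex l e j = Sum.inl v ↔ (j = 0 ∧ G.s e = v) ∨ (l e ≤ j ∧ G.t e = v) := by
  simp only [pathVertex]
  split_ifs with h0 hj
  · simp [h0, he.ne']
  · simp [h0, hj.not_ge]
  · simp [h0, Nat.not_lt.mp hj]

end PathVertex

variable [Fintype E] [DecidableEq V] [DecidableEq E]

lemma mdeg_blowup_apply (ψ : (V ⊕ Σ e : E, Fin (l e - 1)) → ℤ)
    (w : V ⊕ Σ e : E, Fin (l e - 1)) :
    (G.blowup l).mdeg (fun _ => 1) ψ w =
      ∑ e : E, ∑ k : Fin (l e),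
        ((if G.pathVertex l e k = w then
            ψ (G.pathVertex l e ((k : ℕ) + 1)) - ψ (G.pathVertex l e k) else 0) +
         (if G.pathVertex l e ((k : ℕ) + 1) = w then
            ψ (G.pathVertex l e k) - ψ (G.pathVertex l e ((k : ℕ) + 1)) else 0)) := by
  rw [mdeg, ← Finset.univ_sigma_univ, Finset.sum_sigma]
  simp [blowup_s, blowup_t]

lemma mdeg_blowup_inr (ψ : (V ⊕ Σ e : E, Fin (l e - 1)) → ℤ) (e : E) (i : Fin (l e - 1)) :
    (G.blowup l).mdeg (fun _ => 1) ψ (Sum.inr ⟨e, i⟩) =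
      (ψ (G.pathVertex l e ((i : ℕ) + 2)) - ψ (G.pathVertex l e ((i : ℕ) + 1))) +
      (ψ (G.pathVertex l e i) - ψ (G.pathVertex l e ((i : ℕ) + 1))) := by
  have := i.isLt
  rw [mdeg_blowup_apply, Finset.sum_eq_single e]
  · have hin : ∀ k : Fin (l e), G.pathVertex l e k = Sum.inr ⟨e, i⟩ ↔ k = ⟨i + 1, by omega⟩ :=
      fun k => by simp [pathVertex_eq_inr_iff, Fin.ext_iff]
    have hout : ∀ k : Fin (l e), G.pathVertex l e (k + 1) = Sum.inr ⟨e, i⟩ ↔ k = ⟨i, by omega⟩ :=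
      fun k => by simp [pathVertex_eq_inr_iff, Fin.ext_iff]
    simp only [Finset.sum_add_distrib, hin, hout, Finset.sum_ite_eq', Finset.mem_univ, if_true]
  · intro e' _ he'
    simp [pathVertex_ne_inr G l he']
  · simp

lemma mdeg_blowup_inl (hl : ∀ e, 0 < l e) (ψ : (V ⊕ Σ e : E, Fin (l e - 1)) → ℤ) (v : V) :
    (G.blowup l).mdeg (fun _ => 1) ψ (Sum.inl v) =
      ∑ e : E,
        ((if G.s e = v then ψ (G.pathVertex l e 1) - ψ (G.pathVertex l e 0) else 0) +
         (if G.t e = v then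
            ψ (G.pathVertex l e (l e - 1)) - ψ (G.pathVertex l e (l e)) else 0)) := by
  rw [mdeg_blowup_apply]
  refine Finset.sum_congr rfl fun e _ => ?_
  have hlast : l e - 1 + 1 = l e := Nat.sub_add_cancel (hl e)
  have hin : ∀ k : Fin (l e), G.pathVertex l e k = Sum.inl v ↔ k = ⟨0, hl e⟩ ∧ G.s e = v :=
    fun k => by simp [pathVertex_eq_inl_iff G l (hl e), Fin.ext_iff]
  have hout : ∀ k : Fin (l e),
      G.pathVertex l e (k + 1) = Sum.inl v ↔ k = ⟨l e - 1, by omega⟩ ∧ G.t e = v :=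
    fun k => by simp [pathVertex_eq_inl_iff G l (hl e), Fin.ext_iff]; omega
  simp only [Finset.sum_add_distrib, hin, hout, ite_and, Finset.sum_ite_eq', Finset.mem_univ,
    if_true, hlast]

def IsPathHarmonic (ψ : (V ⊕ Σ e : E, Fin (l e - 1)) → ℤ) : Prop :=
  ∀ e (i : Fin (l e - 1)), (G.blowup l).mdeg (fun _ => 1) ψ (Sum.inr ⟨e, i⟩) = 0

def pathSlope (ψ : (V ⊕ Σ e : E, Fin (l e - 1)) → ℤ) (e : E) : ℤ :=
  ψ (G.pathVertex l e 1) - ψ (G.pathVertex l e 0)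

namespace IsPathHarmonic

variable {G l} {ψ : (V ⊕ Σ e : E, Fin (l e - 1)) → ℤ}

lemma succ_sub_eq_pathSlope (hψ : G.IsPathHarmonic l ψ) {e : E} {j : ℕ} (hj : j < l e) :
    ψ (G.pathVertex l e (j + 1)) - ψ (G.pathVertex l e j) = G.pathSlope l ψ e := by
  induction j with
  | zero => rfl
  | succ j ih =>
    have hzero := hψ e ⟨j, by omega⟩
    rw [mdeg_blowup_inr] at hzero
    linarith [ih (by omega)]

lemma sub_pathVertex_zero (hψ : G.IsPathHarmonic l ψ) {e : E} {j : ℕ} (hj : j ≤ l e) :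
    ψ (G.pathVertex l e j) - ψ (G.pathVertex l e 0) = j * G.pathSlope l ψ e := by
  calc ψ (G.pathVertex l e j) - ψ (G.pathVertex l e 0)
      = ∑ k ∈ Finset.range j, (ψ (G.pathVertex l e (k + 1)) - ψ (G.pathVertex l e k)) :=
        (Finset.sum_range_sub (fun k => ψ (G.pathVertex l e k)) j).symm
    _ = ∑ _k ∈ Finset.range j, G.pathSlope l ψ e :=
        Finset.sum_congr rfl fun k hk =>
          hψ.succ_sub_eq_pathSlope (by rw [Finset.mem_range] at hk; omega)
    _ = j * G.pathSlope l ψ e := by simp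

lemma inl_t_sub_inl_s (hψ : G.IsPathHarmonic l ψ) {e : E} (he : 0 < l e) :
    ψ (Sum.inl (G.t e)) - ψ (Sum.inl (G.s e)) = l e * G.pathSlope l ψ e := by
  rw [← pathVertex_self G l he, ← pathVertex_zero G l e, hψ.sub_pathVertex_zero le_rfl]

lemma mdeg_blowup_inl_eq (hψ : G.IsPathHarmonic l ψ) (hl : ∀ e, 0 < l e) (v : V) :
    (G.blowup l).mdeg (fun _ => 1) ψ (Sum.inl v) =
      ∑ e : E, ((if G.s e = v then G.pathSlope l ψ e else 0) +
        (if G.t e = v then -G.pathSlope l ψ e else 0)) := by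
  rw [mdeg_blowup_inl G l hl]
  refine Finset.sum_congr rfl fun e _ => ?_
  have hlast : ψ (G.pathVertex l e (l e - 1)) - ψ (G.pathVertex l e (l e)) =
      -G.pathSlope l ψ e := by
    have := hψ.succ_sub_eq_pathSlope (Nat.sub_lt (hl e) one_pos)
    rw [Nat.sub_one_add_one (hl e).ne'] at this
    linarith
  rw [hlast]
  rfl

end IsPathHarmonic

end Multigraph

theorem statement10_general {V E : Type*} [Fintype E] [DecidableEq V] [DecidableEq E]
    (G : Multigraph V E)
    (l : E → ℕ) (hl : ∀ e, 1 ≤ l e) (α : V → ℤ)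
    (h : ∃ ψ : (V ⊕ Σ e : E, Fin (l e - 1)) → ℤ,
      (G.blowup l).mdeg (fun _ => 1) ψ = Sum.elim α (fun _ => 0)) :
    ∃ φ : V → ℤ, G.Cartier l φ ∧ G.mdeg l φ = α := by
  obtain ⟨ψ, hψ⟩ := h
  have harmonic : G.IsPathHarmonic l ψ := fun e i => by
    simpa using congrFun hψ (Sum.inr ⟨e, i⟩)
  have hslope := fun e => harmonic.inl_t_sub_inl_s (hl e)
  refine ⟨ψ ∘ Sum.inl, Multigraph.cartier_of_sub_eq_mul (φ := ψ ∘ Sum.inl) hslope,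
    funext fun v => ?_⟩
  rw [Multigraph.mdeg_apply_of_sub_eq_mul (φ := ψ ∘ Sum.inl) hl hslope,
    ← harmonic.mdeg_blowup_inl_eq hl, hψ, Sum.elim_inl]

/-- Let `(G,l)` be a finite connected `ℕ`-labelled graph and `(G̃,l̃)`
its total blow-up graph.  The map induced by extension-by-zero between the cokernel of the
multidegree operator `δ` of `(G,l)` (on Cartier labellings) and the cokernel of the
Laplacian `δ̃` of `G̃` is injective: if the extension by zero of `α : ℤ^V` is in the image
of `δ̃`, then `α` is in the image of `δ`. -/
theorem statement10 {V E : Type*} [Fintype V] [Fintype E] [DecidableEq V] [DecidableEq E]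
    (G : Multigraph V E) (hG : G.Connected)
    (l : E → ℕ) (hl : ∀ e, 1 ≤ l e) (α : V → ℤ)
    (h : ∃ ψ : (V ⊕ Σ e : E, Fin (l e - 1)) → ℤ,
      (G.blowup l).mdeg (fun _ => 1) ψ = Sum.elim α (fun _ => 0)) :
    ∃ φ : V → ℤ, G.Cartier l φ ∧ G.mdeg l φ = α :=
  statement10_general G l hl α h
end

section
/- Let (G̃,l̃) be the total blow-up of an ℕ-labelled graph (G,l), and let P be the path in G̃ replacing an edge e of G, with vertices w_0, w_1, …, w_{l(e)} in order. For 1 ≤ i ≤ l(e) let α_i = χ_{w_i} − χ_{w_0} ∈ ℤ^Ṽ. Then in the cokernel H̃ of the Laplacian δ̃ of G̃, the classes satisfy k·[α_1] = [α_k] for all 1 ≤ k ≤ l(e). -/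
/-! Write the Laplacian as `δ̃ψ = ∑ₚ (ψ(t p) - ψ(s p)) (χ_{s p} - χ_{t p})` over the edges `p`.
For `ψ` supported on the interior of the path `w_0, …, w_{l e}` only the edges of that path
contribute. Take `ψ(w_j) = min(j, k) - k` for `j ≥ 1` and `ψ(w_0) = 0`: its increments along
the path are `1 - k` on the first edge, `1` on the next `k - 1` edges and `0` after, so the
sum telescopes to `k (χ_{w_1} - χ_{w_0}) - (χ_{w_k} - χ_{w_0}) = k α_1 - α_k`. -/

namespace Multigraph

variable {V E : Type*}

theorem mdeg_one_apply [DecidableEq V] [Fintype E] (G : Multigraph V E) (ψ : V → ℤ) (u : V) :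
    G.mdeg (fun _ => 1) ψ u =
      ∑ p, (ψ (G.t p) - ψ (G.s p)) * (chi (G.s p) u - chi (G.t p) u) := by
  simp only [mdeg, Nat.cast_one, Int.ediv_one]
  refine Finset.sum_congr rfl fun p _ => ?_
  simp only [chi, eq_comm (a := u)]
  split_ifs <;> ring

variable (G : Multigraph V E) (l : E → ℕ)

theorem blowup_s_mk (e : E) (i : Fin (l e)) :
    (G.blowup l).s ⟨e, i⟩ = G.pathVertex l e i := by
  simp only [blowup, pathVertex]
  split_ifs <;> first | rfl | omega

theorem blowup_t_mk (e : E) (i : Fin (l e)) :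
    (G.blowup l).t ⟨e, i⟩ = G.pathVertex l e (i + 1) := by
  simp only [blowup, pathVertex]
  split_ifs <;> first | rfl | contradiction | omega

variable [DecidableEq E]

/-- `f j` at the interior vertex `w_j = Sum.inr ⟨e, j - 1⟩` of the path replacing `e`,
`0` elsewhere. -/
def pathExtension (e : E) (f : ℕ → ℤ) : V ⊕ (Σ e : E, Fin (l e - 1)) → ℤ
  | Sum.inl _ => 0
  | Sum.inr ⟨e', i⟩ => if e' = e then f (i + 1) else 0

theorem pathExtension_pathVertex {e : E} {f : ℕ → ℤ} (hf0 : f 0 = 0) (hfl : f (l e) = 0)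
    {j : ℕ} (hj : j ≤ l e) : pathExtension l e f (G.pathVertex l e j) = f j := by
  unfold pathVertex
  split_ifs with h0 hlt
  · simp [pathExtension, h0, hf0]
  · simp [pathExtension, Nat.sub_add_cancel (Nat.one_le_iff_ne_zero.mpr h0)]
  · simp [pathExtension, show j = l e by omega, hfl]

theorem pathExtension_pathVertex_of_ne {e e' : E} (h : e' ≠ e) (f : ℕ → ℤ) (j : ℕ) :
    pathExtension l e f (G.pathVertex l e' j) = 0 := by
  unfold pathVertex
  split_ifs <;> simp [pathExtension, h]

theorem mdeg_one_pathExtension [DecidableEq V] [Fintype E] {e : E} {f : ℕ → ℤ} (hf0 : f 0 = 0)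
    (hfl : f (l e) = 0) (u : V ⊕ (Σ e : E, Fin (l e - 1))) :
    (G.blowup l).mdeg (fun _ => 1) (pathExtension l e f) u =
      ∑ i ∈ Finset.range (l e),
        (f (i + 1) - f i) * (chi (G.pathVertex l e i) u - chi (G.pathVertex l e (i + 1)) u) := by
  rw [mdeg_one_apply, Fintype.sum_sigma, Finset.sum_eq_single e, ← Fin.sum_univ_eq_sum_range]
  · refine Finset.sum_congr rfl fun i _ => ?_
    rw [blowup_s_mk, blowup_t_mk, pathExtension_pathVertex G l hf0 hfl i.is_lt.le,
      pathExtension_pathVertex G l hf0 hfl i.is_lt]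
  · intro e' _ hne
    simp [blowup_s_mk, blowup_t_mk, pathExtension_pathVertex_of_ne G l hne]
  · simp

end Multigraph

def ramp (k j : ℕ) : ℤ := if j = 0 then 0 else min (j : ℤ) k - k

theorem ramp_zero (k : ℕ) : ramp k 0 = 0 := rfl

theorem ramp_of_le {k j : ℕ} (h : k ≤ j) : ramp k j = 0 := by
  simp only [ramp]
  split_ifs <;> omega

theorem ramp_succ_sub (k i : ℕ) :
    ramp k (i + 1) - ramp k i = (if i < k then 1 else 0) - if i = 0 then (k : ℤ) else 0 := by
  simp only [ramp, min_def]
  push_cast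
  split_ifs <;> omega

theorem sum_range_ramp_mul {k n : ℕ} (hk : k ≤ n) (c : ℕ → ℤ) :
    ∑ i ∈ Finset.range n, (ramp k (i + 1) - ramp k i) * (c i - c (i + 1)) =
      k * (c 1 - c 0) - (c k - c 0) := by
  obtain ⟨m, rfl⟩ := Nat.exists_eq_add_of_le hk
  simp only [ramp_succ_sub, sub_mul, ite_mul, one_mul, zero_mul, Finset.sum_sub_distrib,
    Finset.sum_ite_eq', Finset.sum_range_add]
  rw [Finset.sum_ite_of_true fun i hi => Finset.mem_range.mp hi,
    Finset.sum_ite_of_false fun i _ => by omega, Finset.sum_const_zero, Finset.sum_range_sub']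
  split_ifs with h0
  · ring
  · obtain rfl : k = 0 := by simp at h0; omega
    simp

theorem statement12_general {V E : Type*} [Fintype E] [DecidableEq V] [DecidableEq E]
    (G : Multigraph V E) (l : E → ℕ) (e : E) (k : ℕ) (hk2 : k ≤ l e) :
    ∃ ψ : (V ⊕ Σ e : E, Fin (l e - 1)) → ℤ,
      (G.blowup l).mdeg (fun _ => 1) ψ = fun u =>
        (k : ℤ) * (chi (G.pathVertex l e 1) u - chi (G.pathVertex l e 0) u) -
          (chi (G.pathVertex l e k) u - chi (G.pathVertex l e 0) u) := by
  refine ⟨Multigraph.pathExtension l e (ramp k), funext fun u => ?_⟩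
  rw [Multigraph.mdeg_one_pathExtension G l (ramp_zero k) (ramp_of_le hk2),
    sum_range_ramp_mul hk2]

/-- Let `(G̃,l̃)` be the total blow-up of `(G,l)` and let
`w_0, w_1, …, w_(l e)` be the path in `G̃` replacing an edge `e` of `G`.  For
`1 ≤ i ≤ l e` set `α_i = χ_(w_i) - χ_(w_0)`.  Then in the cokernel `H̃` of the Laplacian
`δ̃` of `G̃` one has `k·[α_1] = [α_k]` for all `1 ≤ k ≤ l e`, i.e. `k • α_1 - α_k` lies
in the image of `δ̃`. -/
theorem statement12 {V E : Type*} [Fintype V] [Fintype E] [DecidableEq V] [DecidableEq E]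
    (G : Multigraph V E) (hG : G.Connected)
    (l : E → ℕ) (hl : ∀ e, 1 ≤ l e)
    (e : E) (k : ℕ) (hk1 : 1 ≤ k) (hk2 : k ≤ l e) :
    ∃ ψ : (V ⊕ Σ e : E, Fin (l e - 1)) → ℤ,
      (G.blowup l).mdeg (fun _ => 1) ψ = fun u =>
        (k : ℤ) * (chi (G.pathVertex l e 1) u - chi (G.pathVertex l e 0) u) -
          (chi (G.pathVertex l e k) u - chi (G.pathVertex l e 0) u) :=
  statement12_general G l e k hk2
end
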